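/- arXiv:2502.06261 — 2 statements merged into one kernel-verified Lean document; each statement's English description precedes it below -/
import Mathlib

section
/- Fix e ∈ [0,1) with e ≠ 1/2 and rewards r₊, r₋ ∈ ℝ. Define surrogate values ŝ₊ = ((1-e)r₊ - e·r₋)/(1-2e) and ŝ₋ = ((1-e)r₋ - e·r₊)/(1-2e). Then (1-e)·ŝ₊ + e·ŝ₋ = r₊ and (1-e)·ŝ₋ + e·ŝ₊ = r₋. -/
/-- Surrogate reward identity (Lemma 2 algebra): with
`ŝ₊ = ((1-e)r₊ - e·r₋)/(1-2e)` and `ŝ₋ = ((1-e)r₋ - e·r₊)/(1-2e)`,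
we have `(1-e)·ŝ₊ + e·ŝ₋ = r₊` and `(1-e)·ŝ₋ + e·ŝ₊ = r₋`. -/
theorem surrogate_reward_unbiased_algebra
    (e rp rm : ℝ) (he0 : 0 ≤ e) (he1 : e < 1) (hne : e ≠ 1 / 2) :
    (1 - e) * (((1 - e) * rp - e * rm) / (1 - 2 * e))
        + e * (((1 - e) * rm - e * rp) / (1 - 2 * e)) = rp ∧
    (1 - e) * (((1 - e) * rm - e * rp) / (1 - 2 * e))
        + e * (((1 - e) * rp - e * rm) / (1 - 2 * e)) = rm := by
  have h : (1 - 2 * e) ≠ 0 := by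
    intro h; apply hne; linarith
  constructor <;> (rw [mul_div_assoc', mul_div_assoc', ← add_div, div_eq_iff h]; ring)
end

section
/- Let ε be a random noise variable with distribution p and flip probability e = P(ε ∈ E₋) where e ≠ 1/2, and define the surrogate reward R̂(r, ε) = ŝ₊ if (r = r₊ and ε ∈ E₊) or (r = r₋ and ε ∈ E₋), and R̂(r, ε) = ŝ₋ otherwise, with ŝ₊, ŝ₋ as in the surrogate reward formula. Then for each fixed r ∈ {r₊, r₋}, E_ε[R̂(r, ε)] = r. -/
/-- Lemma 2: the surrogate reward is an unbiased estimator of the true reward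
under reward-flipping noise. `E` is a finite noise space partitioned into
`Epos` and its complement, `p` a distribution on `E` with `p(E₋) = e ≠ 1/2`,
and `R̂(r, ε) = ŝ₊` if `(r = r₊ ∧ ε ∈ E₊) ∨ (r = r₋ ∧ ε ∉ E₊)`, else `ŝ₋`.
Then for each fixed `r ∈ {r₊, r₋}`, `E_ε[R̂(r, ε)] = r`. -/
theorem surrogate_reward_unbiased
    {E : Type*} [Fintype E] [DecidableEq E]
    (Epos : Finset E) (p : E → ℝ) (e rp rm : ℝ)
    (hp : ∀ ε, 0 ≤ p ε) (hpsum : ∑ ε, p ε = 1)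
    (he : ∑ ε ∈ Finset.univ \ Epos, p ε = e) (hne : e ≠ 1 / 2)
    (sp sm : ℝ)
    (hsp : sp = ((1 - e) * rp - e * rm) / (1 - 2 * e))
    (hsm : sm = ((1 - e) * rm - e * rp) / (1 - 2 * e))
    (Rhat : ℝ → E → ℝ)
    (hRhat : ∀ r ε, Rhat r ε =
      if (r = rp ∧ ε ∈ Epos) ∨ (r = rm ∧ ε ∉ Epos) then sp else sm)
    (hrdistinct : rp ≠ rm)
    (r : ℝ) (hr : r = rp ∨ r = rm) :
    ∑ ε, p ε * Rhat r ε = r := by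
  have hEpos : ∑ ε ∈ Epos, p ε = 1 - e := by
    have := Finset.sum_sdiff (Finset.subset_univ Epos) (f := p)
    rw [he] at this
    rw [hpsum] at this; linarith
  have hden : (1 - 2 * e) ≠ 0 := by
    intro h; apply hne; linarith
  have key : ∀ a b : ℝ,
      (∀ ε, Rhat r ε = if ε ∈ Epos then a else b) →
      ∑ ε, p ε * Rhat r ε = (1 - e) * a + e * b := by
    intro a b hab
    rw [← Finset.sum_sdiff (Finset.subset_univ Epos)]
    have h1 : ∑ ε ∈ Finset.univ \ Epos, p ε * Rhat r ε
        = ∑ ε ∈ Finset.univ \ Epos, p ε * b := by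
      apply Finset.sum_congr rfl
      intro x hx
      rw [hab x, if_neg (Finset.mem_sdiff.mp hx).2]
    have h2 : ∑ ε ∈ Epos, p ε * Rhat r ε = ∑ ε ∈ Epos, p ε * a := by
      apply Finset.sum_congr rfl
      intro x hx
      rw [hab x, if_pos hx]
    rw [h1, h2, ← Finset.sum_mul, ← Finset.sum_mul, hEpos, he]; ring
  rcases hr with h | h
  · have := key sp sm (fun ε => by
      rw [hRhat]
      by_cases hx : ε ∈ Epos
      · simp [hx, h]
      · simp [hx, h, hrdistinct])
    rw [this, hsp, hsm, h]
    rw [mul_div_assoc', mul_div_assoc', ← add_div, div_eq_iff hden]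
    ring
  · have := key sm sp (fun ε => by
      rw [hRhat]
      by_cases hx : ε ∈ Epos
      · simp [hx, h, hrdistinct.symm]
      · simp [hx, h])
    rw [this, hsp, hsm, h]
    rw [mul_div_assoc', mul_div_assoc', ← add_div, div_eq_iff hden]
    ring
end
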